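/- arXiv:1802.03493 — 4 statements merged into one kernel-verified Lean document; each statement's English description precedes it below -/
import Mathlib

section
/- Bias of the doubly robust estimator in contextual bandits with a stochastic evaluation policy: Let data points (x,a,r) be generated by drawing x from the initial distribution P0, a from the behavior policy π_b(·|x), and r from the reward distribution P_r(x,a) with mean Q(x,a). Let π̂_b be an approximation of π_b, δ(x,a) = 1 − π_b(a|x)/π̂_b(a|x), and Δ(x,a) = Q̂(x,a;β) − Q(x,a) the model bias. Then the bias of the doubly robust estimator ρ̂_DR = (1/n) Σ_{i=1}^n [ (π_e(a_i|x_i)/π̂_b(a_i|x_i)) (r_i − Q̂(x_i,a_i;β)) + V̂^{π_e}(x_i;β) ] satisfies | ρ^{π_e} − E_{P^{π_b}}[ρ̂_DR] | = | E_{P^{π_e}}[ δ(x,a) Δ(x,a) ] |, where the expectation E_{P^{π_e}} is over x ∼ P0 and a ∼ π_e(·|x). -/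
open Finset

/-- Expectation of `f` under the (finitely supported) distribution `p`. -/
noncomputable def pexp {Ω : Type*} [Fintype Ω] (p f : Ω → ℝ) : ℝ := ∑ ω, p ω * f ω

/-- Product distribution of `n` i.i.d. copies of `p`. -/
noncomputable def iidP {Ω : Type*} [Fintype Ω] (p : Ω → ℝ) (n : ℕ) (s : Fin n → Ω) : ℝ :=
  ∏ i, p (s i)

lemma marg {Ω : Type*} [Fintype Ω] (p g : Ω → ℝ) (hp : ∑ ω, p ω = 1) {n : ℕ} (i : Fin n) :
    ∑ s : Fin n → Ω, (∏ j, p (s j)) * g (s i) = ∑ ω, p ω * g ω := by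
  classical
  rw [← Equiv.sum_comp (Equiv.funSplitAt i Ω).symm (fun s => (∏ j, p (s j)) * g (s i))]
  rw [Fintype.sum_prod_type]
  have key : ∀ (ω : Ω) (t : {j : Fin n // j ≠ i} → Ω),
      ((∏ j, p ((Equiv.funSplitAt i Ω).symm (ω, t) j)) *
        g ((Equiv.funSplitAt i Ω).symm (ω, t) i)) =
      (p ω * g ω) * ∏ j : {j : Fin n // j ≠ i}, p (t j) := by
    intro ω t
    have hi : (Equiv.funSplitAt i Ω).symm (ω, t) i = ω := by simp
    have hprod : (∏ j, p ((Equiv.funSplitAt i Ω).symm (ω, t) j)) =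
        p ω * ∏ j : {j : Fin n // j ≠ i}, p (t j) := by
      rw [Fintype.prod_eq_mul_prod_compl i]
      congr 1
      · rw [hi]
      · rw [Finset.prod_subtype (p := fun j => j ≠ i) ({i}ᶜ : Finset (Fin n)) (by simp)
          (fun j => p ((Equiv.funSplitAt i Ω).symm (ω, t) j))]
        apply Fintype.prod_congr
        intro j
        simp [Equiv.funSplitAt, j.prop]
    rw [hprod, hi]; ring
  simp only [key]
  have hone : ∀ ω : Ω, ∑ t : {j : Fin n // j ≠ i} → Ω,
      (p ω * g ω) * ∏ j, p (t j) = p ω * g ω := by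
    intro ω
    rw [← Finset.mul_sum, ← Fintype.prod_sum]
    simp [hp]
  simp only [hone]

lemma pexp_iid_avg {Ω : Type*} [Fintype Ω] (p g : Ω → ℝ) (hp : ∑ ω, p ω = 1)
    {n : ℕ} (hn : 0 < n) :
    pexp (iidP p n) (fun s => (1 / (n : ℝ)) * ∑ i, g (s i)) = pexp p g := by
  unfold pexp iidP
  have : ∀ s : Fin n → Ω, (∏ j, p (s j)) * ((1 / (n : ℝ)) * ∑ i, g (s i)) =
      (1 / (n : ℝ)) * ∑ i, (∏ j, p (s j)) * g (s i) := by
    intro s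
    simp only [Finset.mul_sum]
    exact Finset.sum_congr rfl fun i _ => by ring
  simp only [this]
  rw [← Finset.mul_sum, Finset.sum_comm]
  have : ∀ i : Fin n, ∑ s : Fin n → Ω, (∏ j, p (s j)) * g (s i) = ∑ ω, p ω * g ω :=
    fun i => marg p g hp i
  simp only [this, Finset.sum_const, Finset.card_univ, Fintype.card_fin, nsmul_eq_mul]
  field_simp

/-- Bias of the doubly robust estimator in contextual bandits with a
stochastic evaluation policy. -/
theorem dr_bandit_bias
    {X A R : Type*} [Fintype X] [Fintype A] [Fintype R]
    (P0 : X → ℝ) (πb πbh πe : X → A → ℝ) (Prw : X → A → R → ℝ) (rv : R → ℝ)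
    (Rmax : ℝ) (Qh : X → A → ℝ) (n : ℕ) (hn : 0 < n)
    (hP0 : ∀ x, 0 ≤ P0 x) (hP0sum : ∑ x, P0 x = 1)
    (hπb : ∀ x a, 0 < πb x a) (hπbsum : ∀ x, ∑ a, πb x a = 1)
    (hπbh : ∀ x a, 0 < πbh x a)
    (hπe : ∀ x a, 0 ≤ πe x a) (hπesum : ∀ x, ∑ a, πe x a = 1)
    (habs : ∀ x a, πb x a = 0 → πe x a = 0)
    (hPrw : ∀ x a o, 0 ≤ Prw x a o) (hPrwsum : ∀ x a, ∑ o, Prw x a o = 1)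
    (hRmax : 0 ≤ Rmax) (hrv : ∀ o, 0 ≤ rv o ∧ rv o ≤ Rmax) :
    -- mean reward
    let Q : X → A → ℝ := fun x a => ∑ o, Prw x a o * rv o
    -- model value function
    let Vh : X → ℝ := fun x => ∑ a, πe x a * Qh x a
    -- true value of the evaluation policy
    let ρ : ℝ := ∑ x, P0 x * ∑ a, πe x a * Q x a
    -- sampling distribution of one data point (x, a, r) under the behavior policy
    let p : X × A × R → ℝ := fun s => P0 s.1 * πb s.1 s.2.1 * Prw s.1 s.2.1 s.2.2
    -- single-sample doubly robust term
    let g : X × A × R → ℝ :=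
      fun s => πe s.1 s.2.1 / πbh s.1 s.2.1 * (rv s.2.2 - Qh s.1 s.2.1) + Vh s.1
    -- error in learning the behavior policy
    let δ : X → A → ℝ := fun x a => 1 - πb x a / πbh x a
    -- model bias
    let Δ : X → A → ℝ := fun x a => Qh x a - Q x a
    |ρ - pexp (iidP p n) (fun s => (1 / (n : ℝ)) * ∑ i, g (s i))| =
      |∑ x, P0 x * ∑ a, πe x a * (δ x a * Δ x a)| := by
  intro Q Vh ρ p g δ Δ
  have hpsum : ∑ s : X × A × R, p s = 1 := by
    show ∑ s : X × A × R, P0 s.1 * πb s.1 s.2.1 * Prw s.1 s.2.1 s.2.2 = 1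
    rw [Fintype.sum_prod_type]
    have : ∀ x : X, ∑ y : A × R, P0 x * πb x y.1 * Prw x y.1 y.2 = P0 x := by
      intro x
      rw [Fintype.sum_prod_type]
      have h1 : ∀ a : A, ∑ r : R, P0 x * πb x a * Prw x a r = P0 x * πb x a := by
        intro a; rw [← Finset.mul_sum, hPrwsum, mul_one]
      simp only [h1, ← Finset.mul_sum, hπbsum, mul_one]
    simp only [this, hP0sum]
  rw [pexp_iid_avg p g hpsum hn]
  have hinner : ∀ (x : X) (a : A), ∑ r : R, p (x, a, r) * g (x, a, r) =
      P0 x * (πb x a * (πe x a / πbh x a * (Q x a - Qh x a))) + P0 x * (πb x a * Vh x) := by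
    intro x a
    have h1 : ∀ r : R, p (x, a, r) * g (x, a, r) =
        (P0 x * (πb x a * (πe x a / πbh x a))) * (Prw x a r * rv r) +
        (P0 x * (πb x a * (Vh x - πe x a / πbh x a * Qh x a))) * Prw x a r := by
      intro r
      show P0 x * πb x a * Prw x a r * (πe x a / πbh x a * (rv r - Qh x a) + Vh x) = _
      ring
    simp only [h1, Finset.sum_add_distrib, ← Finset.mul_sum, hPrwsum, mul_one]
    show _ * Q x a + _ = _
    ring
  have hpg : pexp p g = ∑ x, ∑ a,
      (P0 x * (πb x a * (πe x a / πbh x a * (Q x a - Qh x a))) + P0 x * (πe x a * Qh x a)) := by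
    show ∑ s : X × A × R, p s * g s = _
    rw [Fintype.sum_prod_type]
    refine Finset.sum_congr rfl fun x _ => ?_
    rw [Fintype.sum_prod_type]
    simp only [hinner]
    rw [Finset.sum_add_distrib, Finset.sum_add_distrib]
    congr 1
    have hv : ∑ a, P0 x * (πb x a * Vh x) = P0 x * Vh x := by
      have : ∀ a, P0 x * (πb x a * Vh x) = (P0 x * Vh x) * πb x a := fun a => by ring
      simp only [this, ← Finset.mul_sum, hπbsum, mul_one]
    rw [hv]
    show P0 x * (∑ a, πe x a * Qh x a) = _
    rw [Finset.mul_sum]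
  have hkey : ρ - pexp p g = -(∑ x, P0 x * ∑ a, πe x a * (δ x a * Δ x a)) := by
    rw [hpg]
    show (∑ x, P0 x * ∑ a, πe x a * Q x a) - _ = _
    rw [← Finset.sum_neg_distrib, ← Finset.sum_sub_distrib]
    refine Finset.sum_congr rfl fun x _ => ?_
    rw [Finset.mul_sum, Finset.mul_sum, ← Finset.sum_sub_distrib, ← Finset.sum_neg_distrib]
    refine Finset.sum_congr rfl fun a _ => ?_
    show P0 x * (πe x a * Q x a) -
        (P0 x * (πb x a * (πe x a / πbh x a * (Q x a - Qh x a))) + P0 x * (πe x a * Qh x a)) =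
      -(P0 x * (πe x a * ((1 - πb x a / πbh x a) * (Qh x a - Q x a))))
    ring
  rw [hkey, abs_neg]
end

section
/- Variance of the doubly robust estimator in contextual bandits with a stochastic evaluation policy: with δ(x,a) = 1 − π_b(a|x)/π̂_b(a|x), Δ(x,a) = Q̂(x,a;β) − Q(x,a), ω̂(x,a) = π_e(a|x)/π̂_b(a|x), and ω(x,a) = π_e(a|x)/π_b(a|x), the variance of the doubly robust estimator ρ̂_DR built from n i.i.d. samples satisfies n·V_{P^{π_b}}(ρ̂_DR) = E_{P^{π_b}}[ ω̂(x,a)² (r(x,a) − Q(x,a))² ] + V_{P0}( E_{π_e}[ Q(x,a) + δ(x,a)Δ(x,a) ] ) + E_{P0,π_e}[ ω(x,a) ((1−δ(x,a)) Δ(x,a))² − ( E_{π_e}[ (1−δ(x,a)) Δ(x,a) ] )² ], where E_{P^{π_b}} denotes expectation over x ∼ P0, a ∼ π_b(·|x), r ∼ P_r(x,a), E_{π_e}[·] denotes the conditional average over a ∼ π_e(·|x), and V_{P0} denotes the variance over x ∼ P0. -/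
open Finset

/-- Variance of `f` under the (finitely supported) distribution `p`. -/
noncomputable def pvar {Ω : Type*} [Fintype Ω] (p f : Ω → ℝ) : ℝ :=
  pexp p (fun ω => (f ω - pexp p f) ^ 2)

section gen
variable {Ω : Type*} [Fintype Ω]

lemma pexp_iid_prod (p : Ω → ℝ) {n : ℕ} (f : Fin n → Ω → ℝ) :
    pexp (iidP p n) (fun s => ∏ i, f i (s i)) = ∏ i, pexp p (f i) := by
  unfold pexp iidP
  simp_rw [← Finset.prod_mul_distrib]
  rw [← Fintype.piFinset_univ, Finset.sum_prod_piFinset univ (fun i ω => p ω * f i ω)]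

lemma prod_two_ite {ι M : Type*} [Fintype ι] [DecidableEq ι] [CommMonoid M]
    {i j : ι} (hij : i ≠ j) (a b : ι → M) :
    ∏ k, (if k = i then a k else if k = j then b k else 1) = a i * b j := by
  have h : ∀ k, (if k = i then a k else if k = j then b k else 1)
      = (if k = i then a k else 1) * (if k = j then b k else 1) := by
    intro k
    by_cases h1 : k = i
    · subst h1; simp [hij]
    · simp [h1]
  simp_rw [h]
  rw [Finset.prod_mul_distrib, Finset.prod_ite_eq' univ i a, Finset.prod_ite_eq' univ j b]
  simp

lemma pexp_iid_eval (p : Ω → ℝ) (hp : ∑ ω, p ω = 1) {n : ℕ} (i : Fin n) (F : Ω → ℝ) :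
    pexp (iidP p n) (fun s => F (s i)) = pexp p F := by
  have h := pexp_iid_prod p (fun k ω => if k = i then F ω else 1)
  have h1 : ∀ s : Fin n → Ω, (∏ k, if k = i then F (s k) else 1) = F (s i) := by
    intro s; rw [Finset.prod_ite_eq' univ i (fun k => F (s k))]; simp
  have h2 : ∀ k : Fin n, pexp p (fun ω => if k = i then F ω else 1)
      = if k = i then pexp p F else 1 := by
    intro k; by_cases hk : k = i <;> simp [hk, pexp, hp]
  calc pexp (iidP p n) (fun s => F (s i))
      = pexp (iidP p n) (fun s => ∏ k, if k = i then F (s k) else 1) := by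
        congr 1; funext s; rw [h1]
    _ = ∏ k, pexp p (fun ω => if k = i then F ω else 1) := h
    _ = ∏ k, (if k = i then pexp p F else 1) := by simp_rw [h2]
    _ = pexp p F := by rw [Finset.prod_ite_eq' univ i (fun _ => pexp p F)]; simp

lemma pexp_iid_eval2 (p : Ω → ℝ) (hp : ∑ ω, p ω = 1) {n : ℕ} {i j : Fin n} (hij : i ≠ j)
    (F G : Ω → ℝ) :
    pexp (iidP p n) (fun s => F (s i) * G (s j)) = pexp p F * pexp p G := by
  have h := pexp_iid_prod p (fun k ω => if k = i then F ω else if k = j then G ω else 1)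
  have h1 : ∀ s : Fin n → Ω,
      (∏ k, if k = i then F (s k) else if k = j then G (s k) else 1) = F (s i) * G (s j) :=
    fun s => prod_two_ite hij _ _
  have h2 : ∀ k : Fin n, pexp p (fun ω => if k = i then F ω else if k = j then G ω else 1)
      = if k = i then pexp p F else if k = j then pexp p G else 1 := by
    intro k
    by_cases hk : k = i
    · simp [hk]
    · by_cases hk' : k = j <;> simp [hk, hk', pexp, hp]
  calc pexp (iidP p n) (fun s => F (s i) * G (s j))
      = pexp (iidP p n)
          (fun s => ∏ k, if k = i then F (s k) else if k = j then G (s k) else 1) := by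
        congr 1; funext s; rw [h1]
    _ = ∏ k, pexp p (fun ω => if k = i then F ω else if k = j then G ω else 1) := h
    _ = ∏ k, (if k = i then pexp p F else if k = j then pexp p G else 1) := by simp_rw [h2]
    _ = pexp p F * pexp p G := prod_two_ite hij _ _

lemma pexp_sum {ι : Type*} (p : Ω → ℝ) (t : Finset ι) (f : ι → Ω → ℝ) :
    pexp p (fun ω => ∑ i ∈ t, f i ω) = ∑ i ∈ t, pexp p (f i) := by
  unfold pexp
  simp_rw [Finset.mul_sum]
  rw [Finset.sum_comm]

lemma pexp_const_mul (p : Ω → ℝ) (c : ℝ) (f : Ω → ℝ) :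
    pexp p (fun ω => c * f ω) = c * pexp p f := by
  unfold pexp
  rw [Finset.mul_sum]
  exact Finset.sum_congr rfl fun ω _ => by ring

lemma pvar_eq (p : Ω → ℝ) (hp : ∑ ω, p ω = 1) (f : Ω → ℝ) :
    pvar p f = pexp p (fun ω => f ω ^ 2) - (pexp p f) ^ 2 := by
  unfold pvar pexp
  have h : ∀ ω : Ω, p ω * (f ω - ∑ w, p w * f w) ^ 2
      = p ω * f ω ^ 2 - 2 * (∑ w, p w * f w) * (p ω * f ω) + (∑ w, p w * f w) ^ 2 * p ω := by
    intro ω; ring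
  simp_rw [h]
  rw [Finset.sum_add_distrib, Finset.sum_sub_distrib, ← Finset.mul_sum, ← Finset.mul_sum, hp]
  ring

lemma iid_var (p : Ω → ℝ) (hp : ∑ ω, p ω = 1) (g : Ω → ℝ) {n : ℕ} (hn : 0 < n) :
    (n : ℝ) * pvar (iidP p n) (fun s => (1 / (n : ℝ)) * ∑ i, g (s i)) = pvar p g := by
  have hn0 : (n : ℝ) ≠ 0 := Nat.cast_ne_zero.mpr hn.ne'
  set μ := pexp p g with hμ
  have hiid1 : ∑ s : Fin n → Ω, iidP p n s = 1 := by
    unfold iidP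
    rw [← Fintype.piFinset_univ, Finset.sum_prod_piFinset]
    simp [hp]
  have hmean : pexp (iidP p n) (fun s => (1 / (n : ℝ)) * ∑ i, g (s i)) = μ := by
    rw [pexp_const_mul (iidP p n) (1 / (n : ℝ)) (fun s => ∑ i, g (s i)),
      pexp_sum (iidP p n) univ (fun i s => g (s i))]
    simp_rw [pexp_iid_eval p hp _ g]
    rw [Finset.sum_const, card_univ, Fintype.card_fin, nsmul_eq_mul]
    field_simp
    exact hμ.symm
  have h0 : pexp p (fun ω => g ω - μ) = 0 := by
    unfold pexp
    have h : ∀ ω : Ω, p ω * (g ω - μ) = p ω * g ω - μ * p ω := fun ω => by ring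
    simp_rw [h]
    rw [Finset.sum_sub_distrib, ← Finset.mul_sum, hp, mul_one, sub_eq_zero, hμ]
    rfl
  have key : ∀ i j : Fin n, pexp (iidP p n) (fun s => (g (s i) - μ) * (g (s j) - μ))
      = if i = j then pvar p g else 0 := by
    intro i j
    by_cases hij : i = j
    · subst hij
      rw [if_pos rfl]
      calc pexp (iidP p n) (fun s => (g (s i) - μ) * (g (s i) - μ))
          = pexp p (fun ω => (g ω - μ) * (g ω - μ)) :=
            pexp_iid_eval p hp i (fun ω => (g ω - μ) * (g ω - μ))
        _ = pvar p g := by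
            unfold pvar
            rw [← hμ]
            congr 1; funext ω; ring
    · rw [if_neg hij]
      calc pexp (iidP p n) (fun s => (g (s i) - μ) * (g (s j) - μ))
          = pexp p (fun ω => g ω - μ) * pexp p (fun ω => g ω - μ) :=
            pexp_iid_eval2 p hp hij (fun ω => g ω - μ) (fun ω => g ω - μ)
        _ = 0 := by rw [h0]; ring
  have expand : (fun s : Fin n → Ω => ((1 / (n : ℝ)) * ∑ i, g (s i) - μ) ^ 2)
      = fun s => (1 / (n : ℝ)) ^ 2 * ∑ i, ∑ j, (g (s i) - μ) * (g (s j) - μ) := by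
    funext s
    rw [← Finset.sum_mul_sum]
    have h1 : (1 / (n : ℝ)) * ∑ i, g (s i) - μ = (1 / (n : ℝ)) * ∑ i, (g (s i) - μ) := by
      rw [Finset.sum_sub_distrib, Finset.sum_const, card_univ, Fintype.card_fin, nsmul_eq_mul]
      field_simp
    rw [h1]; ring
  have hpv : pvar (iidP p n) (fun s => (1 / (n : ℝ)) * ∑ i, g (s i))
      = pexp (iidP p n) (fun s => ((1 / (n : ℝ)) * ∑ i, g (s i) - μ) ^ 2) := by
    unfold pvar
    rw [hmean]
  rw [hpv, expand,
    pexp_const_mul (iidP p n) ((1 / (n : ℝ)) ^ 2)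
      (fun s => ∑ i, ∑ j, (g (s i) - μ) * (g (s j) - μ)),
    pexp_sum (iidP p n) univ (fun i s => ∑ j, (g (s i) - μ) * (g (s j) - μ))]
  have hsum : ∀ i : Fin n, pexp (iidP p n) (fun s => ∑ j, (g (s i) - μ) * (g (s j) - μ))
      = ∑ j, pexp (iidP p n) (fun s => (g (s i) - μ) * (g (s j) - μ)) :=
    fun i => pexp_sum (iidP p n) univ (fun j s => (g (s i) - μ) * (g (s j) - μ))
  simp_rw [hsum, key, Finset.sum_ite_eq, mem_univ, if_pos, Finset.sum_const, card_univ,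
    Fintype.card_fin, nsmul_eq_mul]
  field_simp

end gen

section bandit
variable {X A R : Type*} [Fintype X] [Fintype A] [Fintype R]

lemma sum_p_one (P0 : X → ℝ) (πb : X → A → ℝ) (Prw : X → A → R → ℝ)
    (hP0sum : ∑ x, P0 x = 1) (hπbsum : ∀ x, ∑ a, πb x a = 1)
    (hPrwsum : ∀ x a, ∑ o, Prw x a o = 1) :
    ∑ s : X × A × R, P0 s.1 * πb s.1 s.2.1 * Prw s.1 s.2.1 s.2.2 = 1 := by
  rw [Fintype.sum_prod_type]
  simp_rw [Fintype.sum_prod_type]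
  simp_rw [← Finset.mul_sum]
  simp_rw [hPrwsum, mul_one]
  simp_rw [← Finset.mul_sum]
  simp_rw [hπbsum, mul_one]
  exact hP0sum

lemma tripleexp (P0 : X → ℝ) (πb : X → A → ℝ) (Prw : X → A → R → ℝ) (F : X → A → R → ℝ) :
    pexp (fun s : X × A × R => P0 s.1 * πb s.1 s.2.1 * Prw s.1 s.2.1 s.2.2)
      (fun s => F s.1 s.2.1 s.2.2)
      = ∑ x, P0 x * ∑ a, πb x a * ∑ r, Prw x a r * F x a r := by
  unfold pexp
  rw [Fintype.sum_prod_type]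
  simp_rw [Fintype.sum_prod_type, Finset.mul_sum]
  exact Finset.sum_congr rfl fun x _ => Finset.sum_congr rfl fun a _ =>
    Finset.sum_congr rfl fun r _ => by ring

end bandit

section bandit2
variable {X A R : Type*} [Fintype X] [Fintype A] [Fintype R]

theorem dr_aux
    (P0 : X → ℝ) (πb πbh πe : X → A → ℝ) (Prw : X → A → R → ℝ) (rv : R → ℝ)
    (Qh : X → A → ℝ)
    (hP0sum : ∑ x, P0 x = 1)
    (hπb : ∀ x a, 0 < πb x a) (hπbsum : ∀ x, ∑ a, πb x a = 1)
    (hπbh : ∀ x a, 0 < πbh x a)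
    (hπesum : ∀ x, ∑ a, πe x a = 1)
    (hPrwsum : ∀ x a, ∑ o, Prw x a o = 1) :
    pvar (fun s : X × A × R => P0 s.1 * πb s.1 s.2.1 * Prw s.1 s.2.1 s.2.2)
      (fun s => πe s.1 s.2.1 / πbh s.1 s.2.1 * (rv s.2.2 - Qh s.1 s.2.1)
        + ∑ a, πe s.1 a * Qh s.1 a) =
      pexp (fun s : X × A × R => P0 s.1 * πb s.1 s.2.1 * Prw s.1 s.2.1 s.2.2)
        (fun s => (πe s.1 s.2.1 / πbh s.1 s.2.1) ^ 2
          * (rv s.2.2 - ∑ o, Prw s.1 s.2.1 o * rv o) ^ 2)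
      + pvar P0 (fun x => ∑ a, πe x a * ((∑ o, Prw x a o * rv o)
          + (1 - πb x a / πbh x a) * (Qh x a - ∑ o, Prw x a o * rv o)))
      + ∑ x, P0 x * ∑ a, πe x a *
          (πe x a / πb x a * ((1 - (1 - πb x a / πbh x a))
              * (Qh x a - ∑ o, Prw x a o * rv o)) ^ 2
            - (∑ a', πe x a' * ((1 - (1 - πb x a' / πbh x a'))
              * (Qh x a' - ∑ o, Prw x a' o * rv o))) ^ 2) := by
  set p : X × A × R → ℝ := fun s => P0 s.1 * πb s.1 s.2.1 * Prw s.1 s.2.1 s.2.2 with hpdef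
  set g : X × A × R → ℝ := fun s => πe s.1 s.2.1 / πbh s.1 s.2.1 * (rv s.2.2 - Qh s.1 s.2.1)
    + ∑ a, πe s.1 a * Qh s.1 a with hgdef
  have hp1 : ∑ s : X × A × R, p s = 1 := sum_p_one P0 πb Prw hP0sum hπbsum hPrwsum
  set QQ : X → A → ℝ := fun x a => ∑ o, Prw x a o * rv o with hQQ
  set VV : X → ℝ := fun x => ∑ b, πe x b * Qh x b with hVV
  set GB : X → A → R → ℝ := fun x a r => πe x a / πbh x a * (rv r - Qh x a) + VV x with hGB
  set NB : X → A → R → ℝ := fun x a r => (πe x a / πbh x a) ^ 2 * (rv r - QQ x a) ^ 2 with hNB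
  set HH : X → A → ℝ := fun x a => VV x - πe x a / πbh x a * (Qh x a - QQ x a) with hHH
  set MM : X → ℝ := fun x => ∑ a, πe x a *
    (QQ x a + (1 - πb x a / πbh x a) * (Qh x a - QQ x a)) with hMM
  set SS : X → ℝ := fun x => ∑ a, πe x a *
    ((1 - (1 - πb x a / πbh x a)) * (Qh x a - QQ x a)) with hSS
  set WW : X → ℝ := fun x => ∑ a, πe x a *
    (πe x a / πb x a * ((1 - (1 - πb x a / πbh x a)) * (Qh x a - QQ x a)) ^ 2 - SS x ^ 2)
    with hWW
  -- pointwise / per-(x,a) facts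
  have key1 : ∀ x a, ∑ r, Prw x a r * GB x a r = HH x a := by
    intro x a
    have e : ∀ r ∈ univ, Prw x a r * GB x a r
        = πe x a / πbh x a * (Prw x a r * rv r)
          + (VV x - πe x a / πbh x a * Qh x a) * Prw x a r := by
      intro r _; simp only [hGB]; ring
    rw [Finset.sum_congr rfl e, Finset.sum_add_distrib, ← Finset.mul_sum, ← Finset.mul_sum,
      hPrwsum, mul_one]
    simp only [hHH, hQQ]
    ring
  have key2 : ∀ x a, ∑ r, Prw x a r * GB x a r ^ 2
      = (∑ r, Prw x a r * NB x a r) + HH x a ^ 2 := by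
    intro x a
    have e : ∀ r ∈ univ, Prw x a r * GB x a r ^ 2
        = Prw x a r * NB x a r
          + (2 * (πe x a / πbh x a) * HH x a) * (Prw x a r * rv r)
          + (HH x a ^ 2 - 2 * (πe x a / πbh x a) * HH x a * QQ x a) * Prw x a r := by
      intro r _; simp only [hGB, hNB, hHH]; ring
    rw [Finset.sum_congr rfl e, Finset.sum_add_distrib, Finset.sum_add_distrib,
      ← Finset.mul_sum, ← Finset.mul_sum, hPrwsum, mul_one]
    simp only [hQQ]
    ring
  have key3 : ∀ x, ∑ a, πb x a * HH x a = MM x := by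
    intro x
    have e : ∀ a ∈ univ, πb x a * HH x a
        = πe x a * (QQ x a + (1 - πb x a / πbh x a) * (Qh x a - QQ x a))
          + (VV x * πb x a - πe x a * Qh x a) := by
      intro a _; simp only [hHH]; ring
    rw [Finset.sum_congr rfl e, Finset.sum_add_distrib, Finset.sum_sub_distrib,
      ← Finset.mul_sum, hπbsum, mul_one]
    simp only [hMM, hVV]
    ring
  have key4 : ∀ x, ∑ a, πb x a * HH x a ^ 2 = WW x + MM x ^ 2 := by
    intro x
    have hSSfold : ∑ a, πe x a * ((1 - (1 - πb x a / πbh x a)) * (Qh x a - QQ x a)) = SS x := by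
      simp only [hSS]
    have e : ∀ a ∈ univ, πb x a * HH x a ^ 2
        = VV x ^ 2 * πb x a
          - (2 * VV x) * (πe x a * ((1 - (1 - πb x a / πbh x a)) * (Qh x a - QQ x a)))
          + πe x a * (πe x a / πb x a
              * ((1 - (1 - πb x a / πbh x a)) * (Qh x a - QQ x a)) ^ 2) := by
      intro a _
      have hb := (hπb x a).ne'
      have hbh := (hπbh x a).ne'
      simp only [hHH]
      field_simp
      ring
    have hM : MM x = VV x - SS x := by
      simp only [hMM, hSS, hVV]
      rw [← Finset.sum_sub_distrib]
      exact Finset.sum_congr rfl fun a _ => by ring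
    have hW : WW x = (∑ a, πe x a * (πe x a / πb x a
        * ((1 - (1 - πb x a / πbh x a)) * (Qh x a - QQ x a)) ^ 2)) - SS x ^ 2 := by
      simp only [hWW, mul_sub]
      rw [Finset.sum_sub_distrib, ← Finset.sum_mul, hπesum, one_mul]
    rw [Finset.sum_congr rfl e, Finset.sum_add_distrib, Finset.sum_sub_distrib,
      ← Finset.mul_sum, hπbsum, mul_one, ← Finset.mul_sum, hSSfold, hW, hM]
    ring
  -- per-x sums
  have E1 : ∀ x, ∑ a, πb x a * ∑ r, Prw x a r * GB x a r = MM x := by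
    intro x
    rw [← key3 x]
    exact Finset.sum_congr rfl fun a _ => by rw [key1 x a]
  have E2 : ∀ x, ∑ a, πb x a * ∑ r, Prw x a r * GB x a r ^ 2
      = (∑ a, πb x a * ∑ r, Prw x a r * NB x a r) + (WW x + MM x ^ 2) := by
    intro x
    have e : ∀ a ∈ univ, πb x a * ∑ r, Prw x a r * GB x a r ^ 2
        = πb x a * ∑ r, Prw x a r * NB x a r + πb x a * HH x a ^ 2 := by
      intro a _; rw [key2]; ring
    rw [Finset.sum_congr rfl e, Finset.sum_add_distrib, key4]
  -- assembly
  calc pvar p g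
      = (∑ x, P0 x * ∑ a, πb x a * ∑ r, Prw x a r * GB x a r ^ 2)
        - (∑ x, P0 x * ∑ a, πb x a * ∑ r, Prw x a r * GB x a r) ^ 2 := by
        rw [pvar_eq p hp1 g]
        congr 1
        · exact tripleexp P0 πb Prw (fun x a r => GB x a r ^ 2)
        · congr 1
          exact tripleexp P0 πb Prw GB
    _ = (∑ x, P0 x * ((∑ a, πb x a * ∑ r, Prw x a r * NB x a r) + (WW x + MM x ^ 2)))
        - (∑ x, P0 x * MM x) ^ 2 := by
        congr 1
        · exact Finset.sum_congr rfl fun x _ => by rw [E2]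
        · congr 1
          exact Finset.sum_congr rfl fun x _ => by rw [E1]
    _ = (∑ x, P0 x * ∑ a, πb x a * ∑ r, Prw x a r * NB x a r)
        + ((∑ x, P0 x * MM x ^ 2) - (∑ x, P0 x * MM x) ^ 2)
        + ∑ x, P0 x * WW x := by
        simp_rw [mul_add]
        rw [Finset.sum_add_distrib, Finset.sum_add_distrib]
        ring
    _ = pexp (fun s : X × A × R => P0 s.1 * πb s.1 s.2.1 * Prw s.1 s.2.1 s.2.2)
          (fun s => (πe s.1 s.2.1 / πbh s.1 s.2.1) ^ 2
            * (rv s.2.2 - ∑ o, Prw s.1 s.2.1 o * rv o) ^ 2)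
        + pvar P0 (fun x => ∑ a, πe x a * ((∑ o, Prw x a o * rv o)
            + (1 - πb x a / πbh x a) * (Qh x a - ∑ o, Prw x a o * rv o)))
        + ∑ x, P0 x * ∑ a, πe x a *
            (πe x a / πb x a * ((1 - (1 - πb x a / πbh x a))
                * (Qh x a - ∑ o, Prw x a o * rv o)) ^ 2
              - (∑ a', πe x a' * ((1 - (1 - πb x a' / πbh x a'))
                * (Qh x a' - ∑ o, Prw x a' o * rv o))) ^ 2) := by
        rw [pvar_eq P0 hP0sum (fun x => ∑ a, πe x a * ((∑ o, Prw x a o * rv o)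
            + (1 - πb x a / πbh x a) * (Qh x a - ∑ o, Prw x a o * rv o)))]
        congr 1
        congr 1
        exact (tripleexp P0 πb Prw NB).symm

end bandit2

/-- Variance of the doubly robust estimator in contextual bandits with a
stochastic evaluation policy and an (approximate) behavior policy `πbh`. -/
theorem dr_bandit_variance
    {X A R : Type*} [Fintype X] [Fintype A] [Fintype R]
    (P0 : X → ℝ) (πb πbh πe : X → A → ℝ) (Prw : X → A → R → ℝ) (rv : R → ℝ)
    (Rmax : ℝ) (Qh : X → A → ℝ) (n : ℕ) (hn : 0 < n)
    (hP0 : ∀ x, 0 ≤ P0 x) (hP0sum : ∑ x, P0 x = 1)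
    (hπb : ∀ x a, 0 < πb x a) (hπbsum : ∀ x, ∑ a, πb x a = 1)
    (hπbh : ∀ x a, 0 < πbh x a)
    (hπe : ∀ x a, 0 ≤ πe x a) (hπesum : ∀ x, ∑ a, πe x a = 1)
    (habs : ∀ x a, πb x a = 0 → πe x a = 0)
    (hPrw : ∀ x a o, 0 ≤ Prw x a o) (hPrwsum : ∀ x a, ∑ o, Prw x a o = 1)
    (hRmax : 0 ≤ Rmax) (hrv : ∀ o, 0 ≤ rv o ∧ rv o ≤ Rmax) :
    -- mean reward
    let Q : X → A → ℝ := fun x a => ∑ o, Prw x a o * rv o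
    -- model value function
    let Vh : X → ℝ := fun x => ∑ a, πe x a * Qh x a
    -- sampling distribution of one data point (x, a, r) under the behavior policy
    let p : X × A × R → ℝ := fun s => P0 s.1 * πb s.1 s.2.1 * Prw s.1 s.2.1 s.2.2
    -- single-sample doubly robust term
    let g : X × A × R → ℝ :=
      fun s => πe s.1 s.2.1 / πbh s.1 s.2.1 * (rv s.2.2 - Qh s.1 s.2.1) + Vh s.1
    -- importance weights
    let ωh : X → A → ℝ := fun x a => πe x a / πbh x a
    let ω : X → A → ℝ := fun x a => πe x a / πb x a
    -- error in learning the behavior policy, and model bias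
    let δ : X → A → ℝ := fun x a => 1 - πb x a / πbh x a
    let Δ : X → A → ℝ := fun x a => Qh x a - Q x a
    (n : ℝ) * pvar (iidP p n) (fun s => (1 / (n : ℝ)) * ∑ i, g (s i)) =
      pexp p (fun s => (ωh s.1 s.2.1) ^ 2 * (rv s.2.2 - Q s.1 s.2.1) ^ 2)
      + pvar P0 (fun x => ∑ a, πe x a * (Q x a + δ x a * Δ x a))
      + ∑ x, P0 x * ∑ a, πe x a *
          (ω x a * ((1 - δ x a) * Δ x a) ^ 2
            - (∑ a', πe x a' * ((1 - δ x a') * Δ x a')) ^ 2) := by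
  intro Q Vh p g ωh ω δ Δ
  have hp1 : ∑ s : X × A × R, p s = 1 := sum_p_one P0 πb Prw hP0sum hπbsum hPrwsum
  rw [iid_var p hp1 g hn]
  exact dr_aux P0 πb πbh πe Prw rv Qh hP0sum hπb hπbsum hπbh hπesum hPrwsum
end

section
/- Bias of the step-wise importance sampling estimator with an estimated behavior policy (Appendix B): with ω̂_{0:t} = Π_{τ=0}^{t} π_e(a_τ|x_τ)/π̂_b(a_τ|x_τ) and δ_{0:t}(ξ) = 1 − Π_{τ=0}^{t} π_b(a_τ|x_τ)/π̂_b(a_τ|x_τ), the step-wise importance sampling estimator ρ̂_{step-IS} = (1/n) Σ_{i=1}^n Σ_{t=0}^{T−1} γ^t ω̂_{0:t}^{(i)} r_t^{(i)} satisfies | ρ^{π_e} − E_{P_ξ^{π_b}}[ρ̂_{step-IS}] | = | Σ_{t=0}^{T−1} γ^t E_{P_ξ^{π_e}}[ δ_{0:t}(ξ) r_t ] |. In particular, if π̂_b = π_b the estimator is unbiased. -/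
open Finset

/-- A `T`-step trajectory: states `x_0, …, x_T`, actions `a_0, …, a_{T-1}` and reward
outcomes `r_0, …, r_{T-1}`. -/
abbrev Traj (X A R : Type*) (T : ℕ) := (Fin (T + 1) → X) × (Fin T → A) × (Fin T → R)

/-- Probability of the trajectory `ξ` when actions are chosen by the policy `π`. -/
noncomputable def trajP {X A R : Type*} {T : ℕ}
    (P0 : X → ℝ) (Pt : X → A → X → ℝ) (Prw : X → A → R → ℝ) (π : X → A → ℝ)
    (ξ : Traj X A R T) : ℝ :=
  P0 (ξ.1 0) * ∏ t : Fin T,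
    (π (ξ.1 t.castSucc) (ξ.2.1 t) * Pt (ξ.1 t.castSucc) (ξ.2.1 t) (ξ.1 t.succ) *
      Prw (ξ.1 t.castSucc) (ξ.2.1 t) (ξ.2.2 t))

/-- Cumulative importance ratio `ω_{t1:t2} = ∏_{τ=t1}^{t2} πe(a_τ|x_τ)/πb(a_τ|x_τ)`
(equal to `1` if `t1 > t2`). -/
noncomputable def cumRatio {X A R : Type*} {T : ℕ} (πe πb : X → A → ℝ)
    (t1 t2 : ℤ) (ξ : Traj X A R T) : ℝ :=
  ∏ τ : Fin T,
    if t1 ≤ ((τ : ℕ) : ℤ) ∧ ((τ : ℕ) : ℤ) ≤ t2 then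
      πe (ξ.1 τ.castSucc) (ξ.2.1 τ) / πb (ξ.1 τ.castSucc) (ξ.2.1 τ)
    else 1

section Aux

variable {X A R : Type*} [Fintype X] [Fintype A] [Fintype R]

/-- Sum over trajectories of an initial weight times a product of step factors. -/
noncomputable def sval (T : ℕ) (μ : X → ℝ) (c : Fin T → X → A → R → X → ℝ) : ℝ :=
  ∑ ξ : Traj X A R T,
    μ (ξ.1 0) * ∏ τ, c τ (ξ.1 τ.castSucc) (ξ.2.1 τ) (ξ.2.2 τ) (ξ.1 τ.succ)

/-- Splitting off the last step of a trajectory. -/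
def trajSnoc (X A R : Type*) (m : ℕ) : (Traj X A R m × (A × R × X)) ≃ Traj X A R (m+1) where
  toFun := fun p => (Fin.snoc p.1.1 p.2.2.2, Fin.snoc p.1.2.1 p.2.1, Fin.snoc p.1.2.2 p.2.2.1)
  invFun := fun ξ => ((Fin.init ξ.1, Fin.init ξ.2.1, Fin.init ξ.2.2),
    (ξ.2.1 (Fin.last m), ξ.2.2 (Fin.last m), ξ.1 (Fin.last (m+1))))
  left_inv := by rintro ⟨⟨x, a, r⟩, ⟨al, rl, xl⟩⟩; simp [Fin.init_snoc]
  right_inv := by rintro ⟨x, a, r⟩; simp [Fin.snoc_init_self]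

lemma sval_zero (μ : X → ℝ) (c : Fin 0 → X → A → R → X → ℝ) :
    sval (X := X) (A := A) (R := R) 0 μ c = ∑ x, μ x := by
  unfold sval
  rw [Fintype.sum_prod_type]
  rw [Fintype.sum_equiv (Equiv.funUnique (Fin 1) X) _ (fun x => μ x) (fun f => by simp)]

lemma sval_succ (m : ℕ) (μ : X → ℝ) (c : Fin (m+1) → X → A → R → X → ℝ)
    (hc : ∀ x, ∑ a, ∑ r, ∑ x', c (Fin.last m) x a r x' = 1) :
    sval (m+1) μ c = sval m μ (fun τ => c τ.castSucc) := by
  unfold sval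
  rw [← Fintype.sum_equiv (trajSnoc X A R m)
      (fun p => (μ (p.1.1 0) * ∏ τ : Fin m,
          c τ.castSucc (p.1.1 τ.castSucc) (p.1.2.1 τ) (p.1.2.2 τ) (p.1.1 τ.succ)) *
        c (Fin.last m) (p.1.1 (Fin.last m)) p.2.1 p.2.2.1 p.2.2.2)
      _ ?_]
  · rw [Fintype.sum_prod_type]
    refine Finset.sum_congr rfl fun ξ _ => ?_
    dsimp only
    rw [← Finset.mul_sum]
    have h1 : ∑ y : A × R × X, c (Fin.last m) (ξ.1 (Fin.last m)) y.1 y.2.1 y.2.2 = 1 := by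
      rw [Fintype.sum_prod_type]
      simp_rw [Fintype.sum_prod_type]
      exact hc _
    rw [h1, mul_one]
  · rintro ⟨⟨x, a, r⟩, ⟨al, rl, xl⟩⟩
    simp only [trajSnoc, Equiv.coe_fn_mk]
    rw [Fin.prod_univ_castSucc]
    simp [Fin.snoc_castSucc, Fin.snoc_last, Fin.succ_castSucc, -Fin.castSucc_succ]
    ring


lemma sval_congr_tail (t : ℕ) : ∀ (T : ℕ) (μ : X → ℝ) (c c' : Fin T → X → A → R → X → ℝ),
    (∀ τ : Fin T, (τ : ℕ) ≤ t → c τ = c' τ) →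
    (∀ τ : Fin T, t < (τ : ℕ) → (∀ x, ∑ a, ∑ r, ∑ x', c τ x a r x' = 1)) →
    (∀ τ : Fin T, t < (τ : ℕ) → (∀ x, ∑ a, ∑ r, ∑ x', c' τ x a r x' = 1)) →
    sval T μ c = sval T μ c'
  | 0, μ, c, c', _, _, _ => by
      congr 1
      funext τ
      exact τ.elim0
  | (m+1), μ, c, c', hagree, hn, hn' => by
      by_cases hm : m ≤ t
      · congr 1
        funext τ
        exact hagree τ (le_trans (Nat.le_of_lt_succ τ.isLt) hm)
      · push_neg at hm
        rw [sval_succ m μ c (hn (Fin.last m) (by simpa using hm)),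
            sval_succ m μ c' (hn' (Fin.last m) (by simpa using hm))]
        exact sval_congr_tail t m μ _ _
          (fun τ hτ => hagree τ.castSucc (by simpa using hτ))
          (fun τ hτ => hn τ.castSucc (by simpa using hτ))
          (fun τ hτ => hn' τ.castSucc (by simpa using hτ))

lemma sval_mass : ∀ (T : ℕ) (μ : X → ℝ) (c : Fin T → X → A → R → X → ℝ),
    (∀ τ x, ∑ a, ∑ r, ∑ x', c τ x a r x' = 1) → sval T μ c = ∑ x, μ x
  | 0, μ, c, _ => sval_zero μ c
  | (m+1), μ, c, h => by
      rw [sval_succ m μ c (h (Fin.last m))]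
      exact sval_mass m μ _ (fun τ => h τ.castSucc)

lemma sum_fun_snoc {Y M : Type*} [Fintype Y] [AddCommMonoid M] {n : ℕ}
    (F : (Fin (n+1) → Y) → M) :
    ∑ f : Fin (n+1) → Y, F f = ∑ y : Y, ∑ g : Fin n → Y, F (Fin.snoc g y) := by
  have e := Fintype.sum_equiv (Fin.snocEquiv (fun _ : Fin (n+1) => Y))
    (fun p => F (Fin.snoc p.2 p.1)) F (fun p => rfl)
  rw [← e, Fintype.sum_prod_type]

lemma sum_pow_iid {Ω : Type*} [Fintype Ω] (p : Ω → ℝ) :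
    ∀ n : ℕ, ∑ g : Fin n → Ω, ∏ j, p (g j) = (∑ ω, p ω) ^ n
  | 0 => by simp
  | (n+1) => by
      rw [sum_fun_snoc (fun g => ∏ j, p (g j))]
      simp_rw [Fin.prod_univ_castSucc, Fin.snoc_castSucc, Fin.snoc_last]
      simp_rw [← Finset.sum_mul, sum_pow_iid p n]
      rw [← Finset.mul_sum, pow_succ]

lemma iid_exp {Ω : Type*} [Fintype Ω] (p f : Ω → ℝ) (hp : ∑ ω, p ω = 1) :
    ∀ n : ℕ, ∑ s : Fin n → Ω, (∏ j, p (s j)) * (∑ i, f (s i)) =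
      (n : ℝ) * ∑ ω, p ω * f ω
  | 0 => by simp
  | (n+1) => by
      have h1 : ∀ y : Ω, ∑ g : Fin n → Ω,
          ((∏ j, p (g j)) * p y * (∑ i : Fin n, f (g i))) =
            p y * ((n : ℝ) * ∑ ω, p ω * f ω) := by
        intro y
        rw [← iid_exp p f hp n, Finset.mul_sum]
        exact Finset.sum_congr rfl fun g _ => by ring
      have h2 : ∀ y : Ω, ∑ g : Fin n → Ω, ((∏ j, p (g j)) * p y * f y) =
          p y * f y := by
        intro y
        rw [← Finset.sum_mul, ← Finset.sum_mul, sum_pow_iid p n, hp, one_pow, one_mul]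
      rw [sum_fun_snoc (fun s => (∏ j, p (s j)) * (∑ i, f (s i)))]
      simp_rw [Fin.prod_univ_castSucc, Fin.sum_univ_castSucc, Fin.snoc_castSucc, Fin.snoc_last,
        mul_add, Finset.sum_add_distrib, h1, h2]
      rw [← Finset.sum_mul, hp, one_mul]
      push_cast
      ring

end Aux

lemma prod_split {ι : Type*} [Fintype ι] (F G H : ι → ℝ) :
    ∏ i, (F i * (G i * H i)) = (∏ i, F i) * ((∏ i, G i) * (∏ i, H i)) := by
  rw [Finset.prod_mul_distrib, Finset.prod_mul_distrib]


/-- Bias of the step-wise importance sampling estimator with an estimated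
behavior policy `πbh`; in particular the estimator is unbiased when `πbh = πb`. -/
theorem step_is_bias_estimated_behavior
    {X A R : Type*} [Fintype X] [Fintype A] [Fintype R] {T : ℕ}
    (P0 : X → ℝ) (Pt : X → A → X → ℝ) (Prw : X → A → R → ℝ) (rv : R → ℝ)
    (Rmax γ : ℝ) (πb πbh πe : X → A → ℝ) (n : ℕ) (hn : 0 < n)
    (hP0 : ∀ x, 0 ≤ P0 x) (hP0sum : ∑ x, P0 x = 1)
    (hPt : ∀ x a x', 0 ≤ Pt x a x') (hPtsum : ∀ x a, ∑ x', Pt x a x' = 1)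
    (hPrw : ∀ x a o, 0 ≤ Prw x a o) (hPrwsum : ∀ x a, ∑ o, Prw x a o = 1)
    (hRmax : 0 ≤ Rmax) (hrv : ∀ o, 0 ≤ rv o ∧ rv o ≤ Rmax)
    (hγ0 : 0 ≤ γ) (hγ1 : γ < 1)
    (hπb : ∀ x a, 0 ≤ πb x a) (hπbsum : ∀ x, ∑ a, πb x a = 1)
    (hπbh : ∀ x a, 0 < πb x a → 0 < πbh x a)
    (hπe : ∀ x a, 0 ≤ πe x a) (hπesum : ∀ x, ∑ a, πe x a = 1)
    (habs : ∀ x a, πb x a = 0 → πe x a = 0) :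
    -- trajectory distributions under the evaluation and behavior policies
    let pE : Traj X A R T → ℝ := trajP P0 Pt Prw πe
    let pB : Traj X A R T → ℝ := trajP P0 Pt Prw πb
    -- true value of the evaluation policy
    let ρ : ℝ := pexp pE (fun ξ => ∑ t : Fin T, γ ^ (t : ℕ) * rv (ξ.2.2 t))
    -- step-wise IS return with the approximate behavior policy
    let stepIS : Traj X A R T → ℝ :=
      fun ξ => ∑ t : Fin T, γ ^ (t : ℕ) * cumRatio πe πbh 0 ((t : ℕ) : ℤ) ξ * rv (ξ.2.2 t)
    -- δ_{0:t}(ξ) = 1 − ∏_{τ=0}^{t} π_b(a_τ|x_τ)/π̂_b(a_τ|x_τ)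
    let δ : ℕ → Traj X A R T → ℝ := fun t ξ => 1 - cumRatio πb πbh 0 ((t : ℤ)) ξ
    -- bias of the n-sample step-IS estimator
    |ρ - pexp (iidP pB n) (fun s => (1 / (n : ℝ)) * ∑ i, stepIS (s i))| =
      |∑ t : Fin T, γ ^ (t : ℕ) * pexp pE (fun ξ => δ (t : ℕ) ξ * rv (ξ.2.2 t))| ∧
    -- in particular, if π̂_b = π_b the estimator is unbiased
      (πbh = πb →
        pexp (iidP pB n) (fun s => (1 / (n : ℝ)) * ∑ i, stepIS (s i)) = ρ) := by

  -- normalization of one-step factors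
  have hnorm : ∀ (π : X → A → ℝ), (∀ x, ∑ a, π x a = 1) →
      ∀ x, ∑ a, ∑ r, ∑ x', π x a * Pt x a x' * Prw x a r = 1 := by
    intro π hπ x
    have h1 : ∀ a r, ∑ x', π x a * Pt x a x' * Prw x a r = π x a * Prw x a r := by
      intro a r
      rw [← Finset.sum_mul, ← Finset.mul_sum, hPtsum, mul_one]
    simp_rw [h1, ← Finset.mul_sum, hPrwsum, mul_one]
    exact hπ x
  -- total mass of the behavior trajectory distribution
  have hmassB : ∑ ξ : Traj X A R T, trajP P0 Pt Prw πb ξ = 1 := by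
    have h : (∑ ξ : Traj X A R T, trajP P0 Pt Prw πb ξ) =
        sval T P0 (fun _ x a r x' => πb x a * Pt x a x' * Prw x a r) := rfl
    rw [h, sval_mass T P0 _ (fun τ x => hnorm πb hπbsum x), hP0sum]
  -- the key marginalization identity
  have key : ∀ t : Fin T,
      (∑ ξ : Traj X A R T,
        trajP P0 Pt Prw πb ξ * (cumRatio πe πbh 0 ((t : ℕ) : ℤ) ξ * rv (ξ.2.2 t))) =
      (∑ ξ : Traj X A R T,
        trajP P0 Pt Prw πe ξ * (cumRatio πb πbh 0 ((t : ℕ) : ℤ) ξ * rv (ξ.2.2 t))) := by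
    intro t
    have eB : (∑ ξ : Traj X A R T,
        trajP P0 Pt Prw πb ξ * (cumRatio πe πbh 0 ((t : ℕ) : ℤ) ξ * rv (ξ.2.2 t))) =
        sval T P0 (fun τ x a r x' =>
          (πb x a * Pt x a x' * Prw x a r) *
            ((if (0:ℤ) ≤ ((τ : ℕ) : ℤ) ∧ ((τ : ℕ) : ℤ) ≤ ((t : ℕ) : ℤ) then
                πe x a / πbh x a else 1) *
              (if τ = t then rv r else 1))) := by
      unfold sval trajP cumRatio
      refine Finset.sum_congr rfl fun ξ _ => ?_
      dsimp only
      rw [prod_split, Finset.prod_ite_eq']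
      simp only [Finset.mem_univ, if_true]
      ring
    have eE : (∑ ξ : Traj X A R T,
        trajP P0 Pt Prw πe ξ * (cumRatio πb πbh 0 ((t : ℕ) : ℤ) ξ * rv (ξ.2.2 t))) =
        sval T P0 (fun τ x a r x' =>
          (πe x a * Pt x a x' * Prw x a r) *
            ((if (0:ℤ) ≤ ((τ : ℕ) : ℤ) ∧ ((τ : ℕ) : ℤ) ≤ ((t : ℕ) : ℤ) then
                πb x a / πbh x a else 1) *
              (if τ = t then rv r else 1))) := by
      unfold sval trajP cumRatio
      refine Finset.sum_congr rfl fun ξ _ => ?_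
      dsimp only
      rw [prod_split, Finset.prod_ite_eq']
      simp only [Finset.mem_univ, if_true]
      ring
    rw [eB, eE]
    refine sval_congr_tail (t : ℕ) T P0 _ _ ?_ ?_ ?_
    · intro τ hτ
      funext x a r x'
      have hc : (0:ℤ) ≤ ((τ : ℕ) : ℤ) ∧ ((τ : ℕ) : ℤ) ≤ ((t : ℕ) : ℤ) :=
        ⟨Int.natCast_nonneg _, by exact_mod_cast hτ⟩
      rw [if_pos hc, if_pos hc]
      split_ifs with h <;> ring
    · intro τ hτ x
      have h1 : ¬((0:ℤ) ≤ ((τ : ℕ) : ℤ) ∧ ((τ : ℕ) : ℤ) ≤ ((t : ℕ) : ℤ)) := by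
        rintro ⟨-, h2⟩
        exact absurd (by exact_mod_cast h2 : (τ : ℕ) ≤ (t : ℕ)) (not_le.mpr hτ)
      have h3 : τ ≠ t := by
        intro e
        rw [e] at hτ
        exact lt_irrefl _ hτ
      simp only [if_neg h1, if_neg h3, mul_one, one_mul]
      exact hnorm πb hπbsum x
    · intro τ hτ x
      have h1 : ¬((0:ℤ) ≤ ((τ : ℕ) : ℤ) ∧ ((τ : ℕ) : ℤ) ≤ ((t : ℕ) : ℤ)) := by
        rintro ⟨-, h2⟩
        exact absurd (by exact_mod_cast h2 : (τ : ℕ) ≤ (t : ℕ)) (not_le.mpr hτ)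
      have h3 : τ ≠ t := by
        intro e
        rw [e] at hτ
        exact lt_irrefl _ hτ
      simp only [if_neg h1, if_neg h3, mul_one, one_mul]
      exact hnorm πe hπesum x
  -- expectation of the iid estimator reduces to a single-trajectory expectation
  have hiid : pexp (iidP (trajP P0 Pt Prw πb) n)
      (fun s => (1 / (n : ℝ)) * ∑ i, ∑ t : Fin T,
        γ ^ (t : ℕ) * cumRatio πe πbh 0 ((t : ℕ) : ℤ) (s i) * rv ((s i).2.2 t)) =
      ∑ ξ : Traj X A R T, trajP P0 Pt Prw πb ξ *
        (∑ t : Fin T, γ ^ (t : ℕ) * cumRatio πe πbh 0 ((t : ℕ) : ℤ) ξ * rv (ξ.2.2 t)) := by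
    unfold pexp iidP
    have h1 : ∀ s : Fin n → Traj X A R T,
        (∏ j, trajP P0 Pt Prw πb (s j)) * ((1 / (n : ℝ)) * ∑ i, ∑ t : Fin T,
          γ ^ (t : ℕ) * cumRatio πe πbh 0 ((t : ℕ) : ℤ) (s i) * rv ((s i).2.2 t)) =
        (1 / (n : ℝ)) * ((∏ j, trajP P0 Pt Prw πb (s j)) * (∑ i, (fun ξ => ∑ t : Fin T,
          γ ^ (t : ℕ) * cumRatio πe πbh 0 ((t : ℕ) : ℤ) ξ * rv (ξ.2.2 t)) (s i))) := by
      intro s; ring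
    rw [Finset.sum_congr rfl fun s _ => h1 s, ← Finset.mul_sum,
      iid_exp (trajP P0 Pt Prw πb)
        (fun ξ => ∑ t : Fin T, γ ^ (t : ℕ) * cumRatio πe πbh 0 ((t : ℕ) : ℤ) ξ * rv (ξ.2.2 t))
        hmassB n]
    have hn' : (n : ℝ) ≠ 0 := Nat.cast_ne_zero.mpr hn.ne'
    rw [← mul_assoc, one_div, inv_mul_cancel₀ hn', one_mul]
  -- interchanging the sums
  have hswap : ∀ (q : Traj X A R T → ℝ) (u : Fin T → Traj X A R T → ℝ),
      (∑ ξ : Traj X A R T, q ξ * ∑ t : Fin T, γ ^ (t : ℕ) * u t ξ * rv (ξ.2.2 t)) =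
      ∑ t : Fin T, γ ^ (t : ℕ) * ∑ ξ : Traj X A R T, q ξ * (u t ξ * rv (ξ.2.2 t)) := by
    intro q u
    simp_rw [Finset.mul_sum]
    rw [Finset.sum_comm]
    refine Finset.sum_congr rfl fun t _ => ?_
    exact Finset.sum_congr rfl fun ξ _ => by ring
  -- the main bias identity
  have main : pexp (trajP P0 Pt Prw πe) (fun ξ => ∑ t : Fin T, γ ^ (t : ℕ) * rv (ξ.2.2 t)) -
      pexp (iidP (trajP P0 Pt Prw πb) n)
        (fun s => (1 / (n : ℝ)) * ∑ i, ∑ t : Fin T,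
          γ ^ (t : ℕ) * cumRatio πe πbh 0 ((t : ℕ) : ℤ) (s i) * rv ((s i).2.2 t)) =
      ∑ t : Fin T, γ ^ (t : ℕ) * pexp (trajP P0 Pt Prw πe)
        (fun ξ => (1 - cumRatio πb πbh 0 ((t : ℕ) : ℤ) ξ) * rv (ξ.2.2 t)) := by
    rw [hiid]
    unfold pexp
    have hρ : (∑ ξ : Traj X A R T, trajP P0 Pt Prw πe ξ *
        ∑ t : Fin T, γ ^ (t : ℕ) * rv (ξ.2.2 t)) =
        ∑ t : Fin T, γ ^ (t : ℕ) *
          ∑ ξ : Traj X A R T, trajP P0 Pt Prw πe ξ * ((1 : ℝ) * rv (ξ.2.2 t)) := by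
      rw [← hswap (trajP P0 Pt Prw πe) (fun _ _ => 1)]
      refine Finset.sum_congr rfl fun ξ _ => ?_
      congr 1
      exact Finset.sum_congr rfl fun t _ => by ring
    rw [hρ, hswap (trajP P0 Pt Prw πb) (fun t ξ => cumRatio πe πbh 0 ((t : ℕ) : ℤ) ξ),
      ← Finset.sum_sub_distrib]
    refine Finset.sum_congr rfl fun t _ => ?_
    rw [key t, ← mul_sub, ← Finset.sum_sub_distrib]
    congr 1
    refine Finset.sum_congr rfl fun ξ _ => ?_
    ring
  refine ⟨?_, ?_⟩
  · show |pexp (trajP P0 Pt Prw πe) (fun ξ => ∑ t : Fin T, γ ^ (t : ℕ) * rv (ξ.2.2 t)) -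
        pexp (iidP (trajP P0 Pt Prw πb) n)
          (fun s => (1 / (n : ℝ)) * ∑ i, ∑ t : Fin T,
            γ ^ (t : ℕ) * cumRatio πe πbh 0 ((t : ℕ) : ℤ) (s i) * rv ((s i).2.2 t))| =
      |∑ t : Fin T, γ ^ (t : ℕ) * pexp (trajP P0 Pt Prw πe)
          (fun ξ => (1 - cumRatio πb πbh 0 ((t : ℕ) : ℤ) ξ) * rv (ξ.2.2 t))|
    rw [main]
  · intro hbb
    subst hbb
    have hzero : ∀ t : Fin T, pexp (trajP P0 Pt Prw πe)
        (fun ξ => (1 - cumRatio πbh πbh 0 ((t : ℕ) : ℤ) ξ) * rv (ξ.2.2 t)) = 0 := by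
      intro t
      unfold pexp
      refine Finset.sum_eq_zero fun ξ _ => ?_
      dsimp only
      by_cases hz : trajP P0 Pt Prw πe ξ = 0
      · rw [hz, zero_mul]
      · have hcum : cumRatio πbh πbh 0 ((t : ℕ) : ℤ) ξ = 1 := by
          unfold cumRatio
          refine Finset.prod_eq_one fun τ _ => ?_
          split_ifs with h'
          · apply div_self
            unfold trajP at hz
            have h2 := (mul_ne_zero_iff.mp hz).2
            rw [Finset.prod_ne_zero_iff] at h2
            have h3 := h2 τ (Finset.mem_univ τ)
            have h4 : πe (ξ.1 τ.castSucc) (ξ.2.1 τ) ≠ 0 := by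
              intro e
              exact h3 (by rw [e, zero_mul, zero_mul])
            intro e
            exact h4 (habs _ _ e)
          · rfl
        rw [hcum]
        simp
    have h0 : (∑ t : Fin T, γ ^ (t : ℕ) * pexp (trajP P0 Pt Prw πe)
        (fun ξ => (1 - cumRatio πbh πbh 0 ((t : ℕ) : ℤ) ξ) * rv (ξ.2.2 t))) = 0 := by
      refine Finset.sum_eq_zero fun t _ => ?_
      rw [hzero t, mul_zero]
    show pexp (iidP (trajP P0 Pt Prw πbh) n)
          (fun s => (1 / (n : ℝ)) * ∑ i, ∑ t : Fin T,
            γ ^ (t : ℕ) * cumRatio πe πbh 0 ((t : ℕ) : ℤ) (s i) * rv ((s i).2.2 t)) =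
        pexp (trajP P0 Pt Prw πe) (fun ξ => ∑ t : Fin T, γ ^ (t : ℕ) * rv (ξ.2.2 t))
    have := main
    rw [h0] at this
    linarith
end

section
/- Strong consistency of the MRDR estimator (Appendix F): suppose the cumulative importance ratio ω_{t1:t2} is bounded for every time interval 0 ≤ t1 ≤ t2 ≤ T−1, the behavior policy is known, and the estimated model parameters β*_n converge almost surely to a limit β*. Then the MRDR estimator, i.e., the doubly robust estimator ρ̂_{MRDR,n}(β*_n) = (1/n) Σ_{i=1}^n Σ_{t=0}^{T−1} γ^t [ ω_{0:t}^{(i)} r_t^{(i)} − ( ω_{0:t}^{(i)} Q̂^{π_e}(x_t^{(i)},a_t^{(i)};β*_n) − ω_{0:t−1}^{(i)} V̂^{π_e}(x_t^{(i)};β*_n) ) ] built from n i.i.d. trajectories generated by π_b with the β-continuous model Q̂^{π_e}, converges almost surely to ρ^{π_e} as n → ∞. -/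
open Finset

section Aux

set_option linter.unusedSectionVars false

variable {X A R : Type*} [Fintype X] [Fintype A] [Fintype R]

/-- Prepend one step to a trajectory. -/
def consT {T : ℕ} (x0 : X) (a0 : A) (r0 : R) (τ : Traj X A R T) : Traj X A R (T + 1) :=
  (Fin.cons x0 τ.1, Fin.cons a0 τ.2.1, Fin.cons r0 τ.2.2)

def consEquivT {T : ℕ} : (X × A × R) × Traj X A R T ≃ Traj X A R (T + 1) where
  toFun p := consT p.1.1 p.1.2.1 p.1.2.2 p.2
  invFun τ := ((τ.1 0, τ.2.1 0, τ.2.2 0), (Fin.tail τ.1, Fin.tail τ.2.1, Fin.tail τ.2.2))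
  left_inv := by rintro ⟨⟨x, a, r⟩, ⟨f, g, h⟩⟩; simp [consT, Fin.tail_cons]
  right_inv := by rintro ⟨f, g, h⟩; simp [consT, Fin.cons_self_tail]

lemma sum_traj_succ {T : ℕ} (F : Traj X A R (T + 1) → ℝ) :
    ∑ τ : Traj X A R (T + 1), F τ
      = ∑ x0 : X, ∑ a0 : A, ∑ r0 : R, ∑ τ : Traj X A R T, F (consT x0 a0 r0 τ) := by
  rw [← Equiv.sum_comp (consEquivT (X := X) (A := A) (R := R) (T := T)) F,
    Fintype.sum_prod_type]
  simp_rw [Fintype.sum_prod_type]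
  rfl

lemma trajP_cons {T : ℕ} (P0 : X → ℝ) (Pt : X → A → X → ℝ) (Prw : X → A → R → ℝ)
    (π : X → A → ℝ) (x0 : X) (a0 : A) (r0 : R) (τ : Traj X A R T) :
    trajP P0 Pt Prw π (consT x0 a0 r0 τ)
      = P0 x0 * π x0 a0 * Prw x0 a0 r0 * trajP (Pt x0 a0) Pt Prw π τ := by
  unfold trajP consT
  simp only [Fin.prod_univ_succ, Fin.cons_zero, Fin.cons_succ, Fin.castSucc_zero,
    Fin.succ_zero_eq_one, ← Fin.succ_castSucc]
  ring

lemma cumRatio_neg {T : ℕ} (πe πb : X → A → ℝ) (t2 : ℤ) (ht : t2 < 0)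
    (τ : Traj X A R T) : cumRatio πe πb 0 t2 τ = 1 :=
  Finset.prod_eq_one fun i _ => if_neg (by omega)

lemma cumRatio_cons {T : ℕ} (πe πb : X → A → ℝ) (t2 : ℤ) (x0 : X) (a0 : A) (r0 : R)
    (τ : Traj X A R T) :
    cumRatio πe πb 0 t2 (consT x0 a0 r0 τ)
      = (if 0 ≤ t2 then πe x0 a0 / πb x0 a0 else 1) * cumRatio πe πb 0 (t2 - 1) τ := by
  unfold cumRatio consT
  rw [Fin.prod_univ_succ]
  congr 1
  · simp
  · refine Finset.prod_congr rfl fun i _ => ?_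
    have hcond : (0 ≤ ((i.succ : ℕ) : ℤ) ∧ ((i.succ : ℕ) : ℤ) ≤ t2)
        ↔ (0 ≤ ((i : ℕ) : ℤ) ∧ ((i : ℕ) : ℤ) ≤ t2 - 1) := by
      simp only [Fin.val_succ]; push_cast; omega
    rw [if_congr hcond rfl rfl]
    simp [← Fin.succ_castSucc]

lemma trajP_mass (Pt : X → A → X → ℝ) (Prw : X → A → R → ℝ) (π : X → A → ℝ)
    (hPtsum : ∀ x a, ∑ x', Pt x a x' = 1) (hPrwsum : ∀ x a, ∑ o, Prw x a o = 1)
    (hπsum : ∀ x, ∑ a, π x a = 1) :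
    ∀ (T : ℕ) (ν : X → ℝ), ∑ τ : Traj X A R T, trajP ν Pt Prw π τ = ∑ x, ν x := by
  intro T
  induction T with
  | zero =>
    intro ν
    rw [Fintype.sum_prod_type]
    simp_rw [Fintype.sum_prod_type]
    simp only [trajP, Finset.univ_unique, Fin.prod_univ_zero, mul_one, Finset.sum_singleton]
    exact Fintype.sum_equiv (Equiv.funUnique (Fin 1) X) _ _ (fun f => rfl)
  | succ T ih =>
    intro ν
    rw [sum_traj_succ]
    simp_rw [trajP_cons, ← Finset.mul_sum, ih, hPtsum, mul_one]
    simp_rw [← Finset.mul_sum, hPrwsum, mul_one]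
    simp_rw [← Finset.mul_sum, hπsum, mul_one]

lemma key1 (Pt : X → A → X → ℝ) (Prw : X → A → R → ℝ) (πb πe : X → A → ℝ)
    (hPtsum : ∀ x a, ∑ x', Pt x a x' = 1) (hPrwsum : ∀ x a, ∑ o, Prw x a o = 1)
    (hπbsum : ∀ x, ∑ a, πb x a = 1) (hπesum : ∀ x, ∑ a, πe x a = 1)
    (hπb : ∀ x a, 0 < πb x a) (f : X → A → R → ℝ) :
    ∀ (t : ℕ) (T : ℕ) (ht : t < T) (ν : X → ℝ),
      ∑ τ : Traj X A R T, trajP ν Pt Prw πb τ * cumRatio πe πb 0 (t : ℤ) τ *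
          f (τ.1 (⟨t, ht⟩ : Fin T).castSucc) (τ.2.1 ⟨t, ht⟩) (τ.2.2 ⟨t, ht⟩)
        = ∑ τ : Traj X A R T, trajP ν Pt Prw πe τ *
          f (τ.1 (⟨t, ht⟩ : Fin T).castSucc) (τ.2.1 ⟨t, ht⟩) (τ.2.2 ⟨t, ht⟩) := by
  intro t
  induction t with
  | zero =>
    intro T ht ν
    obtain ⟨T', rfl⟩ : ∃ T', T = T' + 1 := ⟨T - 1, by omega⟩
    rw [sum_traj_succ, sum_traj_succ]
    refine Finset.sum_congr rfl fun x0 _ => Finset.sum_congr rfl fun a0 _ =>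
      Finset.sum_congr rfl fun r0 _ => ?_
    have e1 : ∑ τ : Traj X A R T', trajP (Pt x0 a0) Pt Prw πb τ = 1 := by
      rw [trajP_mass Pt Prw πb hPtsum hPrwsum hπbsum T' (Pt x0 a0)]; exact hPtsum x0 a0
    have e2 : ∑ τ : Traj X A R T', trajP (Pt x0 a0) Pt Prw πe τ = 1 := by
      rw [trajP_mass Pt Prw πe hPtsum hPrwsum hπesum T' (Pt x0 a0)]; exact hPtsum x0 a0
    have hne : πb x0 a0 ≠ 0 := (hπb x0 a0).ne'
    trans ((ν x0 * πe x0 a0 * Prw x0 a0 r0 * f x0 a0 r0)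
        * ∑ τ : Traj X A R T', trajP (Pt x0 a0) Pt Prw πb τ)
    · rw [Finset.mul_sum]
      refine Finset.sum_congr rfl fun τ _ => ?_
      rw [trajP_cons, cumRatio_cons, if_pos (by simp : (0:ℤ) ≤ ((0:ℕ):ℤ)),
        cumRatio_neg πe πb _ (by norm_num)]
      simp only [consT, Fin.mk_zero, Fin.castSucc_zero, Fin.cons_zero]
      field_simp
    · rw [e1, mul_one]
      have h2 : ∑ τ : Traj X A R T',
          trajP ν Pt Prw πe (consT x0 a0 r0 τ)
            * f ((consT x0 a0 r0 τ).1 (⟨0, ht⟩ : Fin (T'+1)).castSucc)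
              ((consT x0 a0 r0 τ).2.1 ⟨0, ht⟩) ((consT x0 a0 r0 τ).2.2 ⟨0, ht⟩)
          = (ν x0 * πe x0 a0 * Prw x0 a0 r0 * f x0 a0 r0)
            * ∑ τ : Traj X A R T', trajP (Pt x0 a0) Pt Prw πe τ := by
        rw [Finset.mul_sum]
        refine Finset.sum_congr rfl fun τ _ => ?_
        rw [trajP_cons]
        simp only [consT, Fin.mk_zero, Fin.castSucc_zero, Fin.cons_zero]
        ring
      rw [h2, e2, mul_one]
  | succ t iht =>
    intro T ht ν
    obtain ⟨T', rfl⟩ : ∃ T', T = T' + 1 := ⟨T - 1, by omega⟩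
    have ht' : t < T' := by omega
    rw [sum_traj_succ, sum_traj_succ]
    refine Finset.sum_congr rfl fun x0 _ => Finset.sum_congr rfl fun a0 _ =>
      Finset.sum_congr rfl fun r0 _ => ?_
    have hne : πb x0 a0 ≠ 0 := (hπb x0 a0).ne'
    have hidx : (⟨t + 1, ht⟩ : Fin (T' + 1)) = (⟨t, ht'⟩ : Fin T').succ := rfl
    have hcast : (((t + 1 : ℕ)) : ℤ) - 1 = ((t : ℕ) : ℤ) := by push_cast; ring
    trans ((ν x0 * πe x0 a0 * Prw x0 a0 r0)
        * ∑ τ : Traj X A R T', trajP (Pt x0 a0) Pt Prw πb τ * cumRatio πe πb 0 (t : ℤ) τ *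
            f (τ.1 (⟨t, ht'⟩ : Fin T').castSucc) (τ.2.1 ⟨t, ht'⟩) (τ.2.2 ⟨t, ht'⟩))
    · rw [Finset.mul_sum]
      refine Finset.sum_congr rfl fun τ _ => ?_
      rw [hidx, trajP_cons, cumRatio_cons, if_pos (by positivity : (0:ℤ) ≤ ((t+1 : ℕ):ℤ)),
        hcast]
      simp only [consT, ← Fin.succ_castSucc, Fin.cons_succ]
      field_simp
    · rw [iht T' ht' (Pt x0 a0), Finset.mul_sum]
      refine Finset.sum_congr rfl fun τ _ => ?_
      rw [hidx, trajP_cons]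
      simp only [consT, ← Fin.succ_castSucc, Fin.cons_succ]
      ring

lemma key2 (Pt : X → A → X → ℝ) (Prw : X → A → R → ℝ) (πb πe : X → A → ℝ)
    (hPtsum : ∀ x a, ∑ x', Pt x a x' = 1) (hPrwsum : ∀ x a, ∑ o, Prw x a o = 1)
    (hπbsum : ∀ x, ∑ a, πb x a = 1)
    (hπb : ∀ x a, 0 < πb x a) (Q : X → A → ℝ) :
    ∀ (t : ℕ) (T : ℕ) (ht : t < T) (ν : X → ℝ),
      ∑ τ : Traj X A R T, trajP ν Pt Prw πb τ * cumRatio πe πb 0 (t : ℤ) τ *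
          Q (τ.1 (⟨t, ht⟩ : Fin T).castSucc) (τ.2.1 ⟨t, ht⟩)
        = ∑ τ : Traj X A R T, trajP ν Pt Prw πb τ * cumRatio πe πb 0 ((t : ℤ) - 1) τ *
          (∑ a, πe (τ.1 (⟨t, ht⟩ : Fin T).castSucc) a * Q (τ.1 (⟨t, ht⟩ : Fin T).castSucc) a) := by
  intro t
  induction t with
  | zero =>
    intro T ht ν
    obtain ⟨T', rfl⟩ : ∃ T', T = T' + 1 := ⟨T - 1, by omega⟩
    rw [sum_traj_succ, sum_traj_succ]
    refine Finset.sum_congr rfl fun x0 _ => ?_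
    have e1 : ∀ a0 : A, ∑ τ : Traj X A R T', trajP (Pt x0 a0) Pt Prw πb τ = 1 := fun a0 => by
      rw [trajP_mass Pt Prw πb hPtsum hPrwsum hπbsum T' (Pt x0 a0)]; exact hPtsum x0 a0
    have hL : ∀ a0 : A, ∑ r0 : R, ∑ τ : Traj X A R T',
        trajP ν Pt Prw πb (consT x0 a0 r0 τ) * cumRatio πe πb 0 ((0:ℕ) : ℤ) (consT x0 a0 r0 τ) *
          Q ((consT x0 a0 r0 τ).1 (⟨0, ht⟩ : Fin (T'+1)).castSucc) ((consT x0 a0 r0 τ).2.1 ⟨0, ht⟩)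
        = ν x0 * (πe x0 a0 * Q x0 a0) := by
      intro a0
      have hne : πb x0 a0 ≠ 0 := (hπb x0 a0).ne'
      have h1 : ∀ r0 : R, ∑ τ : Traj X A R T',
          trajP ν Pt Prw πb (consT x0 a0 r0 τ) * cumRatio πe πb 0 ((0:ℕ) : ℤ) (consT x0 a0 r0 τ) *
            Q ((consT x0 a0 r0 τ).1 (⟨0, ht⟩ : Fin (T'+1)).castSucc) ((consT x0 a0 r0 τ).2.1 ⟨0, ht⟩)
          = (ν x0 * (πe x0 a0 * Q x0 a0) * Prw x0 a0 r0)
            * ∑ τ : Traj X A R T', trajP (Pt x0 a0) Pt Prw πb τ := by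
        intro r0
        rw [Finset.mul_sum]
        refine Finset.sum_congr rfl fun τ _ => ?_
        rw [trajP_cons, cumRatio_cons, if_pos (by simp : (0:ℤ) ≤ ((0:ℕ):ℤ)),
          cumRatio_neg πe πb _ (by norm_num)]
        simp only [consT, Fin.mk_zero, Fin.castSucc_zero, Fin.cons_zero]
        field_simp
      simp_rw [h1, e1, mul_one, ← Finset.mul_sum, hPrwsum, mul_one]
    have hR : ∀ a0 : A, ∑ r0 : R, ∑ τ : Traj X A R T',
        trajP ν Pt Prw πb (consT x0 a0 r0 τ)
            * cumRatio πe πb 0 (((0:ℕ) : ℤ) - 1) (consT x0 a0 r0 τ) *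
          (∑ a, πe ((consT x0 a0 r0 τ).1 (⟨0, ht⟩ : Fin (T'+1)).castSucc) a *
            Q ((consT x0 a0 r0 τ).1 (⟨0, ht⟩ : Fin (T'+1)).castSucc) a)
        = ν x0 * πb x0 a0 * (∑ a, πe x0 a * Q x0 a) := by
      intro a0
      have h1 : ∀ r0 : R, ∑ τ : Traj X A R T',
          trajP ν Pt Prw πb (consT x0 a0 r0 τ)
              * cumRatio πe πb 0 (((0:ℕ) : ℤ) - 1) (consT x0 a0 r0 τ) *
            (∑ a, πe ((consT x0 a0 r0 τ).1 (⟨0, ht⟩ : Fin (T'+1)).castSucc) a *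
              Q ((consT x0 a0 r0 τ).1 (⟨0, ht⟩ : Fin (T'+1)).castSucc) a)
          = (ν x0 * πb x0 a0 * (∑ a, πe x0 a * Q x0 a) * Prw x0 a0 r0)
            * ∑ τ : Traj X A R T', trajP (Pt x0 a0) Pt Prw πb τ := by
        intro r0
        rw [Finset.mul_sum]
        refine Finset.sum_congr rfl fun τ _ => ?_
        rw [trajP_cons, cumRatio_neg πe πb _ (by norm_num)]
        simp only [consT, Fin.mk_zero, Fin.castSucc_zero, Fin.cons_zero]
        ring
      simp_rw [h1, e1, mul_one, ← Finset.mul_sum, hPrwsum, mul_one]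
    simp_rw [hL, hR]
    rw [← Finset.mul_sum, ← Finset.sum_mul, ← Finset.mul_sum, hπbsum, mul_one]
  | succ t iht =>
    intro T ht ν
    obtain ⟨T', rfl⟩ : ∃ T', T = T' + 1 := ⟨T - 1, by omega⟩
    have ht' : t < T' := by omega
    rw [sum_traj_succ, sum_traj_succ]
    refine Finset.sum_congr rfl fun x0 _ => Finset.sum_congr rfl fun a0 _ =>
      Finset.sum_congr rfl fun r0 _ => ?_
    have hne : πb x0 a0 ≠ 0 := (hπb x0 a0).ne'
    have hidx : (⟨t + 1, ht⟩ : Fin (T' + 1)) = (⟨t, ht'⟩ : Fin T').succ := rfl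
    have hcast : (((t + 1 : ℕ)) : ℤ) - 1 = ((t : ℕ) : ℤ) := by push_cast; ring
    trans ((ν x0 * πe x0 a0 * Prw x0 a0 r0)
        * ∑ τ : Traj X A R T', trajP (Pt x0 a0) Pt Prw πb τ * cumRatio πe πb 0 (t : ℤ) τ *
            Q (τ.1 (⟨t, ht'⟩ : Fin T').castSucc) (τ.2.1 ⟨t, ht'⟩))
    · rw [Finset.mul_sum]
      refine Finset.sum_congr rfl fun τ _ => ?_
      rw [hidx, trajP_cons, cumRatio_cons, if_pos (by positivity : (0:ℤ) ≤ ((t+1 : ℕ):ℤ)),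
        hcast]
      simp only [consT, ← Fin.succ_castSucc, Fin.cons_succ]
      field_simp
    · rw [iht T' ht' (Pt x0 a0), Finset.mul_sum]
      refine Finset.sum_congr rfl fun τ _ => ?_
      rw [hidx, trajP_cons, cumRatio_cons, hcast, if_pos (by positivity : (0:ℤ) ≤ ((t : ℕ):ℤ))]
      simp only [consT, ← Fin.succ_castSucc, Fin.cons_succ]
      field_simp

lemma exp_dr (P0 : X → ℝ) (Pt : X → A → X → ℝ) (Prw : X → A → R → ℝ) (rv : R → ℝ)
    (γ : ℝ) (πb πe : X → A → ℝ)
    (hPtsum : ∀ x a, ∑ x', Pt x a x' = 1) (hPrwsum : ∀ x a, ∑ o, Prw x a o = 1)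
    (hπbsum : ∀ x, ∑ a, πb x a = 1) (hπesum : ∀ x, ∑ a, πe x a = 1)
    (hπb : ∀ x a, 0 < πb x a) (Q : X → A → ℝ) (T : ℕ) :
    ∑ τ : Traj X A R T, trajP P0 Pt Prw πb τ *
      (∑ t : Fin T, γ ^ (t : ℕ) * (cumRatio πe πb 0 ((t : ℕ) : ℤ) τ * rv (τ.2.2 t)
        - (cumRatio πe πb 0 ((t : ℕ) : ℤ) τ * Q (τ.1 t.castSucc) (τ.2.1 t)
          - cumRatio πe πb 0 (((t : ℕ) : ℤ) - 1) τ *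
            ∑ a, πe (τ.1 t.castSucc) a * Q (τ.1 t.castSucc) a)))
    = ∑ τ : Traj X A R T, trajP P0 Pt Prw πe τ * (∑ t : Fin T, γ ^ (t : ℕ) * rv (τ.2.2 t)) := by
  have hswap : ∀ (p : Traj X A R T → ℝ) (g : Traj X A R T → Fin T → ℝ),
      ∑ τ, p τ * ∑ t, g τ t = ∑ t, ∑ τ, p τ * g τ t := by
    intro p g
    simp_rw [Finset.mul_sum]
    exact Finset.sum_comm
  rw [hswap, hswap]
  refine Finset.sum_congr rfl fun t _ => ?_
  have hk1 := key1 Pt Prw πb πe hPtsum hPrwsum hπbsum hπesum hπb (fun _ _ r => rv r)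
    (t : ℕ) T t.isLt P0
  have hk2 := key2 Pt Prw πb πe hPtsum hPrwsum hπbsum hπb Q (t : ℕ) T t.isLt P0
  simp only [Fin.eta] at hk1 hk2
  calc ∑ τ : Traj X A R T, trajP P0 Pt Prw πb τ *
        (γ ^ (t : ℕ) * (cumRatio πe πb 0 ((t : ℕ) : ℤ) τ * rv (τ.2.2 t)
          - (cumRatio πe πb 0 ((t : ℕ) : ℤ) τ * Q (τ.1 t.castSucc) (τ.2.1 t)
            - cumRatio πe πb 0 (((t : ℕ) : ℤ) - 1) τ *
              ∑ a, πe (τ.1 t.castSucc) a * Q (τ.1 t.castSucc) a)))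
      = γ ^ (t : ℕ) *
          ((∑ τ : Traj X A R T, trajP P0 Pt Prw πb τ * cumRatio πe πb 0 ((t : ℕ) : ℤ) τ *
              rv (τ.2.2 t))
            - ((∑ τ : Traj X A R T, trajP P0 Pt Prw πb τ * cumRatio πe πb 0 ((t : ℕ) : ℤ) τ *
                Q (τ.1 t.castSucc) (τ.2.1 t))
              - (∑ τ : Traj X A R T, trajP P0 Pt Prw πb τ *
                  cumRatio πe πb 0 (((t : ℕ) : ℤ) - 1) τ *
                  ∑ a, πe (τ.1 t.castSucc) a * Q (τ.1 t.castSucc) a))) := by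
        rw [← Finset.sum_sub_distrib, ← Finset.sum_sub_distrib, Finset.mul_sum]
        exact Finset.sum_congr rfl fun τ _ => by ring
    _ = γ ^ (t : ℕ) * ∑ τ : Traj X A R T, trajP P0 Pt Prw πe τ * rv (τ.2.2 t) := by
        rw [hk2, sub_self, sub_zero, hk1]
    _ = ∑ τ : Traj X A R T, trajP P0 Pt Prw πe τ * (γ ^ (t : ℕ) * rv (τ.2.2 t)) := by
        rw [Finset.mul_sum]
        exact Finset.sum_congr rfl fun τ _ => by ring

end Aux

open MeasureTheory Filter in
/-- Strong consistency of the MRDR estimator.  If the cumulative importance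
ratios are bounded, the behavior policy is known, the i.i.d. trajectories `ξ i` have the
law of `P_ξ^{π_b}`, and the (data-dependent) estimated model parameters `βn n` converge
almost surely to some `βs`, then the MRDR estimator converges almost surely to `ρ^{π_e}`. -/
theorem mrdr_strongly_consistent
    {X A R : Type*} [Fintype X] [Fintype A] [Fintype R] {T κ : ℕ}
    (P0 : X → ℝ) (Pt : X → A → X → ℝ) (Prw : X → A → R → ℝ) (rv : R → ℝ)
    (Rmax γ : ℝ) (πb πe : X → A → ℝ)
    (Qh : X → A → (Fin κ → ℝ) → ℝ)
    {Ω : Type*} [MeasurableSpace Ω] (μ : Measure Ω) [IsProbabilityMeasure μ]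
    (m : MeasurableSpace (Traj X A R T)) (hm : m = ⊤)
    (ξ : ℕ → Ω → Traj X A R T)
    (βs : Fin κ → ℝ) (βn : ℕ → Ω → Fin κ → ℝ)
    (hP0 : ∀ x, 0 ≤ P0 x) (hP0sum : ∑ x, P0 x = 1)
    (hPt : ∀ x a x', 0 ≤ Pt x a x') (hPtsum : ∀ x a, ∑ x', Pt x a x' = 1)
    (hPrw : ∀ x a o, 0 ≤ Prw x a o) (hPrwsum : ∀ x a, ∑ o, Prw x a o = 1)
    (hRmax : 0 ≤ Rmax) (hrv : ∀ o, 0 ≤ rv o ∧ rv o ≤ Rmax)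
    (hγ0 : 0 ≤ γ) (hγ1 : γ < 1)
    (hπb : ∀ x a, 0 < πb x a) (hπbsum : ∀ x, ∑ a, πb x a = 1)
    (hπe : ∀ x a, 0 ≤ πe x a) (hπesum : ∀ x, ∑ a, πe x a = 1)
    -- the model is continuous in the parameter β
    (hcont : ∀ x a, Continuous (Qh x a))
    -- the cumulative importance ratios are bounded on every time interval
    (hbdd : ∃ B : ℝ, ∀ (t1 t2 : ℤ) (τ : Traj X A R T), |cumRatio πe πb t1 t2 τ| ≤ B)
    -- the trajectories are measurable, independent, and distributed as P_ξ^{π_b}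
    (hmeas : ∀ i, @Measurable Ω (Traj X A R T) _ m (ξ i))
    (hindep : ProbabilityTheory.iIndepFun (m := fun _ : ℕ => m) ξ μ)
    (hlaw : ∀ i τ, μ {ω | ξ i ω = τ} = ENNReal.ofReal (trajP P0 Pt Prw πb τ))
    -- the estimated model parameters converge almost surely to βs
    (hβ : ∀ᵐ ω ∂μ, Tendsto (fun k => βn k ω) atTop (nhds βs)) :
    -- true value of the evaluation policy
    let ρ : ℝ := pexp (trajP P0 Pt Prw πe)
      (fun τ : Traj X A R T => ∑ t : Fin T, γ ^ (t : ℕ) * rv (τ.2.2 t))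
    -- model value function and the single-trajectory doubly robust term at parameter β
    let Vh : (Fin κ → ℝ) → X → ℝ := fun β x => ∑ a, πe x a * Qh x a β
    let dr : (Fin κ → ℝ) → Traj X A R T → ℝ := fun β τ =>
      ∑ t : Fin T, γ ^ (t : ℕ) *
        (cumRatio πe πb 0 ((t : ℕ) : ℤ) τ * rv (τ.2.2 t)
          - (cumRatio πe πb 0 ((t : ℕ) : ℤ) τ * Qh (τ.1 t.castSucc) (τ.2.1 t) β
              - cumRatio πe πb 0 (((t : ℕ) : ℤ) - 1) τ * Vh β (τ.1 t.castSucc)))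
    -- the MRDR estimator is strongly consistent
    ∀ᵐ ω ∂μ, Tendsto
      (fun k : ℕ => (1 / (k : ℝ)) * ∑ i : Fin k, dr (βn k ω) (ξ i ω))
      atTop (nhds ρ) := by
  intro ρ Vh dr
  classical
  subst hm
  letI : MeasurableSpace (Traj X A R T) := ⊤
  -- the trajectory distribution is nonnegative
  have hpnn : ∀ τ : Traj X A R T, 0 ≤ trajP P0 Pt Prw πb τ := by
    intro τ
    refine mul_nonneg (hP0 _) (Finset.prod_nonneg fun i _ => ?_)
    exact mul_nonneg (mul_nonneg (hπb _ _).le (hPt _ _ _)) (hPrw _ _ _)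
  -- the expectation of the DR term at the limiting parameter is ρ
  have hexp : ∑ τ : Traj X A R T, trajP P0 Pt Prw πb τ * dr βs τ = ρ := by
    show _ = pexp (trajP P0 Pt Prw πe) _
    rw [pexp]
    exact exp_dr P0 Pt Prw rv γ πb πe hPtsum hPrwsum hπbsum hπesum hπb
      (fun x a => Qh x a βs) T
  -- measurability facts
  have hpre : ∀ (i : ℕ) (τ : Traj X A R T), MeasurableSet (ξ i ⁻¹' {τ}) :=
    fun i τ => hmeas i MeasurableSpace.measurableSet_top
  have hYmeas : ∀ i : ℕ, Measurable fun ω => dr βs (ξ i ω) :=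
    fun i => (measurable_from_top (f := dr βs)).comp (hmeas i)
  -- indicator representation
  have hrep : ∀ (β : Fin κ → ℝ) (i : ℕ) (ω : Ω), dr β (ξ i ω)
      = ∑ τ : Traj X A R T, (ξ i ⁻¹' {τ}).indicator (fun _ => dr β τ) ω := by
    intro β i ω
    have hτ : ∀ τ : Traj X A R T, (ξ i ⁻¹' {τ}).indicator (fun _ => dr β τ) ω
        = if ξ i ω = τ then dr β τ else 0 := by
      intro τ
      by_cases h : ξ i ω = τ
      · rw [if_pos h, Set.indicator_of_mem (by exact h) _]
      · rw [if_neg h, Set.indicator_of_notMem (by exact h) _]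
    simp_rw [hτ]
    rw [Finset.sum_ite_eq]
    simp
  have hint : Integrable (fun ω => dr βs (ξ 0 ω)) μ := by
    rw [show (fun ω => dr βs (ξ 0 ω))
        = fun ω => ∑ τ : Traj X A R T, (ξ 0 ⁻¹' {τ}).indicator (fun _ => dr βs τ) ω
      from funext fun ω => hrep βs 0 ω]
    exact integrable_finset_sum _ fun τ _ => (integrable_const _).indicator (hpre 0 τ)
  -- the expectation
  have hEY : ∫ ω, dr βs (ξ 0 ω) ∂μ = ρ := by
    calc ∫ ω, dr βs (ξ 0 ω) ∂μ
        = ∑ τ : Traj X A R T, ∫ ω, (ξ 0 ⁻¹' {τ}).indicator (fun _ => dr βs τ) ω ∂μ := by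
          rw [show (fun ω => dr βs (ξ 0 ω))
              = fun ω => ∑ τ : Traj X A R T, (ξ 0 ⁻¹' {τ}).indicator (fun _ => dr βs τ) ω
            from funext fun ω => hrep βs 0 ω]
          exact integral_finset_sum _ fun τ _ => (integrable_const _).indicator (hpre 0 τ)
      _ = ∑ τ : Traj X A R T, trajP P0 Pt Prw πb τ * dr βs τ := by
          refine Finset.sum_congr rfl fun τ _ => ?_
          rw [integral_indicator_const _ (hpre 0 τ), measureReal_def,
            show ξ 0 ⁻¹' {τ} = {ω | ξ 0 ω = τ} from rfl, hlaw 0 τ,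
            ENNReal.toReal_ofReal (hpnn τ), smul_eq_mul]
      _ = ρ := hexp
  -- identical distribution
  have hmapeq : ∀ j : ℕ, Measure.map (ξ j) μ = Measure.map (ξ 0) μ := by
    intro j
    have key : ∀ (k : ℕ) (s : Set (Traj X A R T)), μ (ξ k ⁻¹' s)
        = ∑ τ ∈ (Set.toFinite s).toFinset, ENNReal.ofReal (trajP P0 Pt Prw πb τ) := by
      intro k s
      have hdecomp : ξ k ⁻¹' s = ⋃ τ ∈ (Set.toFinite s).toFinset, ξ k ⁻¹' {τ} := by
        ext ω
        simp only [Set.mem_preimage, Set.mem_iUnion, Set.Finite.mem_toFinset,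
          Set.mem_singleton_iff, exists_prop]
        exact ⟨fun h => ⟨ξ k ω, h, rfl⟩, fun ⟨τ, hτ, he⟩ => he ▸ hτ⟩
      rw [hdecomp, measure_biUnion_finset ?_ (fun τ _ => hpre k τ)]
      · exact Finset.sum_congr rfl fun τ _ => by
          rw [show ξ k ⁻¹' {τ} = {ω | ξ k ω = τ} from rfl, hlaw k τ]
      · intro τ1 _ τ2 _ hne
        refine Set.disjoint_left.2 fun ω h1 h2 => hne ?_
        have e1 : ξ k ω = τ1 := h1
        have e2 : ξ k ω = τ2 := h2
        rw [← e1, e2]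
    refine Measure.ext fun s hs => ?_
    rw [Measure.map_apply (hmeas j) hs, Measure.map_apply (hmeas 0) hs, key j, key 0]
  have hident : ∀ i : ℕ, ProbabilityTheory.IdentDistrib (fun ω => dr βs (ξ i ω))
      (fun ω => dr βs (ξ 0 ω)) μ μ := by
    intro i
    refine ⟨(hYmeas i).aemeasurable, (hYmeas 0).aemeasurable, ?_⟩
    show μ.map ((dr βs) ∘ (ξ i)) = μ.map ((dr βs) ∘ (ξ 0))
    rw [← Measure.map_map measurable_from_top (hmeas i),
      ← Measure.map_map measurable_from_top (hmeas 0), hmapeq i]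
  have hindepY : Pairwise (Function.onFun (fun f g => ProbabilityTheory.IndepFun f g μ)
      (fun i ω => dr βs (ξ i ω))) := by
    intro i j hij
    exact (hindep.comp (fun _ => dr βs) (fun _ => measurable_from_top)).indepFun hij
  have hslln := ProbabilityTheory.strong_law_ae (fun i ω => dr βs (ξ i ω)) hint hindepY hident
  -- continuity of the DR term in β
  have hdrc : ∀ τ : Traj X A R T, Continuous fun β => dr β τ := by
    intro τ
    refine continuous_finset_sum _ fun t _ => continuous_const.mul ?_
    refine Continuous.sub continuous_const (Continuous.sub
      (continuous_const.mul (hcont _ _)) (continuous_const.mul ?_))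
    exact continuous_finset_sum _ fun a _ => continuous_const.mul (hcont _ _)
  set D : (Fin κ → ℝ) → ℝ := fun β => ∑ τ : Traj X A R T, |dr β τ - dr βs τ| with hD
  have hDcont : Continuous D :=
    continuous_finset_sum _ fun τ _ => ((hdrc τ).sub continuous_const).abs
  have hD0 : D βs = 0 := by simp [hD]
  have hDnn : ∀ β, 0 ≤ D β := fun β => Finset.sum_nonneg fun τ _ => abs_nonneg _
  have hDle : ∀ (β : Fin κ → ℝ) (τ0 : Traj X A R T), |dr β τ0 - dr βs τ0| ≤ D β :=
    fun β τ0 => Finset.single_le_sum (f := fun τ => |dr β τ - dr βs τ|)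
      (fun τ _ => abs_nonneg _) (Finset.mem_univ τ0)
  filter_upwards [hβ, hslln] with ω hβω hsω
  have h1 : Tendsto (fun k : ℕ => (k : ℝ)⁻¹ * ∑ i ∈ Finset.range k, dr βs (ξ i ω))
      atTop (nhds ρ) := by
    simpa [smul_eq_mul, hEY] using hsω
  have h2 : Tendsto (fun k : ℕ => D (βn k ω)) atTop (nhds 0) := by
    have := (hDcont.tendsto βs).comp hβω
    rwa [hD0] at this
  have h3 : Tendsto (fun k : ℕ => (1 / (k : ℝ)) *
      ∑ i ∈ Finset.range k, (dr (βn k ω) (ξ i ω) - dr βs (ξ i ω))) atTop (nhds 0) := by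
    refine squeeze_zero_norm (fun k => ?_) h2
    rcases Nat.eq_zero_or_pos k with hk | hk
    · subst hk
      simpa using hDnn (βn 0 ω)
    · have hkR : (0 : ℝ) < (k : ℝ) := by exact_mod_cast hk
      calc ‖(1 / (k : ℝ)) * ∑ i ∈ Finset.range k, (dr (βn k ω) (ξ i ω) - dr βs (ξ i ω))‖
          = (1 / (k : ℝ)) * |∑ i ∈ Finset.range k, (dr (βn k ω) (ξ i ω) - dr βs (ξ i ω))| := by
            rw [Real.norm_eq_abs, abs_mul, abs_of_nonneg (by positivity)]
        _ ≤ (1 / (k : ℝ)) * ∑ i ∈ Finset.range k, |dr (βn k ω) (ξ i ω) - dr βs (ξ i ω)| := by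
            exact mul_le_mul_of_nonneg_left (Finset.abs_sum_le_sum_abs _ _) (by positivity)
        _ ≤ (1 / (k : ℝ)) * ∑ i ∈ Finset.range k, D (βn k ω) := by
            exact mul_le_mul_of_nonneg_left
              (Finset.sum_le_sum fun i _ => hDle (βn k ω) (ξ i ω)) (by positivity)
        _ = D (βn k ω) := by
            rw [Finset.sum_const, Finset.card_range, nsmul_eq_mul]
            field_simp
  have hfin : ∀ k : ℕ, (1 / (k : ℝ)) * ∑ i : Fin k, dr (βn k ω) (ξ i ω)
      = (k : ℝ)⁻¹ * ∑ i ∈ Finset.range k, dr βs (ξ i ω)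
        + (1 / (k : ℝ)) * ∑ i ∈ Finset.range k, (dr (βn k ω) (ξ i ω) - dr βs (ξ i ω)) := by
    intro k
    rw [Fin.sum_univ_eq_sum_range (fun i => dr (βn k ω) (ξ i ω)) k, Finset.sum_sub_distrib,
      one_div]
    ring
  have hcomb := h1.add h3
  rw [add_zero] at hcomb
  exact Tendsto.congr (fun k => (hfin k).symm) hcomb
end
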